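/- For every k ≥ 1, every iteration i, and all k-tuples v⃗, u⃗ of vertices of a finite simple graph G: if the colorings agree initially (F_0 = O_0) then F_i(v⃗) = F_i(u⃗) implies O_i(v⃗) = O_i(u⃗). That is, at every iteration the folklore k-WL coloring refines the oblivious k-WL coloring. -/

import Mathlib

/-- Color type for the folklore k-WL coloring at iteration `i`, with initial colors in `κ`:
at each refinement step a multiset of `k`-vectors of previous colors is recorded. -/
def FColorK (κ : Type) (k : ℕ) : ℕ → Type
  | 0 => κ
  | (i+1) => FColorK κ k i × Multiset (Fin k → FColorK κ k i)

/-- Color type for the oblivious k-WL coloring at iteration `i`, with initial colors in `κ`: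
at each refinement step a `k`-vector of multisets of previous colors is recorded. -/
def OColorK (κ : Type) (k : ℕ) : ℕ → Type
  | 0 => κ
  | (i+1) => OColorK κ k i × (Fin k → Multiset (OColorK κ k i))

/-- The folklore k-WL coloring with initial coloring `C0`:
`F_0 = C0` and `F_{i+1}(v⃗) = (F_i(v⃗), ⟦(F_i(φ_1(v⃗,w)), …, F_i(φ_k(v⃗,w))) : w ∈ V⟧)`,
where `φ_j(v⃗,w)` replaces the `j`-th component of `v⃗` by `w`. -/
def fwlK {V : Type} [Fintype V] [DecidableEq V] {κ : Type} {k : ℕ}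
    (C0 : (Fin k → V) → κ) : (i : ℕ) → (Fin k → V) → FColorK κ k i
  | 0 => C0
  | (i+1) => fun v =>
      (fwlK C0 i v,
       (Finset.univ.val : Multiset V).map
         (fun w => fun j => fwlK C0 i (Function.update v j w)))

/-- The oblivious k-WL coloring with initial coloring `C0`:
`O_0 = C0` and `O_{i+1}(v⃗) = (O_i(v⃗), (⟦O_i(φ_j(v⃗,w)) : w ∈ V⟧)_{j=1,…,k})`. -/
def owlK {V : Type} [Fintype V] [DecidableEq V] {κ : Type} {k : ℕ}
    (C0 : (Fin k → V) → κ) : (i : ℕ) → (Fin k → V) → OColorK κ k i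
  | 0 => C0
  | (i+1) => fun v =>
      (owlK C0 i v,
       fun j => (Finset.univ.val : Multiset V).map
         (fun w => owlK C0 i (Function.update v j w)))

/-! Each folklore color `F_{i+1}(v⃗)` records the multiset of `k`-vectors `(F_i(φ_j(v⃗,w)))_j`;
projecting it to the `j`-th coordinate gives the multiset `⟦F_i(φ_j(v⃗,w)) : w⟧`, and the
oblivious color `O_{i+1}(v⃗)` consists of exactly these multisets with `O_i` in place of `F_i`.
So by induction `O_i` is a function of `F_i`, and pushing multisets forward along that function
carries equal folklore colors to equal oblivious colors. -/

theorem Multiset.map_eq_map_of_factorsThrough {α β γ : Type*} {f : α → β} {g : α → γ}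
    (hgf : g.FactorsThrough f) {s t : Multiset α} (hst : s.map f = t.map f) :
    s.map g = t.map g := by
  rcases isEmpty_or_nonempty α with hα | ⟨⟨a⟩⟩
  · rw [Multiset.eq_zero_of_forall_notMem (s := s) isEmptyElim,
      Multiset.eq_zero_of_forall_notMem (s := t) isEmptyElim]
  · rw [← hgf.extend_comp (fun _ => g a), ← Multiset.map_map, ← Multiset.map_map, hst]

section WeisfeilerLeman

variable {V : Type} [Fintype V] [DecidableEq V] {κ : Type} {k : ℕ} (C0 : (Fin k → V) → κ)

/-- The neighbourhood `⟦φ_j(v⃗,w) : w ∈ V⟧` of `v⃗` in direction `j`. -/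
def neighborsAlong (v : Fin k → V) (j : Fin k) : Multiset (Fin k → V) :=
  (Finset.univ.val : Multiset V).map (Function.update v j)

theorem fwlK_succ_snd_map_eval (i : ℕ) (v : Fin k → V) (j : Fin k) :
    (fwlK C0 (i + 1) v).2.map (fun c => c j) = (neighborsAlong v j).map (fwlK C0 i) := by
  simp only [fwlK, neighborsAlong, Multiset.map_map, Function.comp_def]

theorem owlK_succ_snd (i : ℕ) (v : Fin k → V) (j : Fin k) :
    (owlK C0 (i + 1) v).2 j = (neighborsAlong v j).map (owlK C0 i) := by
  simp only [owlK, neighborsAlong, Multiset.map_map, Function.comp_def]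

theorem owlK_factorsThrough_fwlK (i : ℕ) : (owlK C0 i).FactorsThrough (fwlK C0 i) := by
  induction i with
  | zero => exact Function.FactorsThrough.rfl
  | succ i ih =>
    intro v u h
    refine Prod.ext (ih (congrArg Prod.fst h)) (funext fun j => ?_)
    rw [owlK_succ_snd, owlK_succ_snd]
    refine Multiset.map_eq_map_of_factorsThrough ih ?_
    rw [← fwlK_succ_snd_map_eval, ← fwlK_succ_snd_map_eval, h]

end WeisfeilerLeman

theorem stmt_6_general {V : Type} [Fintype V] [DecidableEq V] {κ : Type} {k : ℕ}
    (C0 : (Fin k → V) → κ) :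
    ∀ (i : ℕ) (v u : Fin k → V), fwlK C0 i v = fwlK C0 i u → owlK C0 i v = owlK C0 i u :=
  fun i _ _ h => owlK_factorsThrough_fwlK C0 i h

/-- For every `k ≥ 1`, if the folklore and oblivious k-WL colorings start from the same
initial coloring `C0` (determined by the ordered isomorphism type of the induced subgraph
on the tuple), then at every iteration `i` the folklore coloring refines the oblivious one:
`F_i(v⃗) = F_i(u⃗)` implies `O_i(v⃗) = O_i(u⃗)`. -/
theorem stmt_6 {V : Type} [Fintype V] [DecidableEq V] (G : SimpleGraph V) [DecidableRel G.Adj]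
    {κ : Type} {k : ℕ} (hk : 1 ≤ k)
    (C0 : (Fin k → V) → κ)
    (hC0 : ∀ v u : Fin k → V,
      ((∀ j j' : Fin k, (v j = v j' ↔ u j = u j') ∧ (G.Adj (v j) (v j') ↔ G.Adj (u j) (u j'))))
        ↔ C0 v = C0 u) :
    ∀ (i : ℕ) (v u : Fin k → V), fwlK C0 i v = fwlK C0 i u → owlK C0 i v = owlK C0 i u :=
  stmt_6_general C0
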